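/- arXiv:1505.02318 — 2 statements merged into one kernel-verified Lean document; each statement's English description precedes it below -/
import Mathlib

section
/- For every unsatisfiable hitting clause-set F with F ≠ {∅} (i.e., n(F) > 0), the number nfc(F) of full clauses of F is even. -/
/-- A clause: a finite set of nonzero integers (literals) that is clash-free. -/
def IsClause (C : Finset ℤ) : Prop := (0 : ℤ) ∉ C ∧ ∀ x ∈ C, -x ∉ C

/-- A clause-set: a finite set of clauses. -/
def IsClauseSet (F : Finset (Finset ℤ)) : Prop := ∀ C ∈ F, IsClause C

/-- The variables of a clause: the absolute values of its literals. -/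
def clauseVar (C : Finset ℤ) : Finset ℕ := C.image Int.natAbs

/-- The variables of a clause-set. -/
def var (F : Finset (Finset ℤ)) : Finset ℕ := F.biUnion clauseVar

/-- The number of variables `n(F)`. -/
def numVar (F : Finset (Finset ℤ)) : ℕ := (var F).card

/-- The deficiency `δ(F) = c(F) - n(F)`. -/
def deficiency (F : Finset (Finset ℤ)) : ℤ := (F.card : ℤ) - (numVar F : ℤ)

/-- `F` is satisfiable iff some clause `C` intersects every clause of `F`. -/
def Satisfiable (F : Finset (Finset ℤ)) : Prop :=
  ∃ C : Finset ℤ, IsClause C ∧ ∀ D ∈ F, (C ∩ D).Nonempty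

/-- `F` is hitting iff any two distinct clauses of `F` clash. -/
def Hitting (F : Finset (Finset ℤ)) : Prop :=
  ∀ C ∈ F, ∀ D ∈ F, C ≠ D → ∃ x ∈ C, -x ∈ D

/-- `F` is minimally unsatisfiable. -/
def MinUnsat (F : Finset (Finset ℤ)) : Prop :=
  ¬ Satisfiable F ∧ ∀ G ⊂ F, Satisfiable G

/-- The number of full clauses of `F`. -/
def nfc (F : Finset (Finset ℤ)) : ℕ :=
  (F.filter (fun C => clauseVar C = var F)).card

/-- The degree of a variable `v` in `F`. -/
def vdeg (F : Finset (Finset ℤ)) (v : ℕ) : ℕ :=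
  (F.filter (fun C => v ∈ clauseVar C)).card

/-- The minimal variable-degree of `F` (for `n(F) > 0`). -/
noncomputable def minVarDeg (F : Finset (Finset ℤ)) : ℕ :=
  sInf {d : ℕ | ∃ v ∈ var F, vdeg F v = d}

open Finset

/-- An assignment is encoded by the finite set `T` of variables it sets to true. -/
def LitTrue (T : Finset ℕ) (x : ℤ) : Prop := x.natAbs ∈ T ↔ 0 < x

instance (T : Finset ℕ) (x : ℤ) : Decidable (LitTrue T x) :=
  inferInstanceAs (Decidable (_ ↔ _))

def Falsifies (T : Finset ℕ) (C : Finset ℤ) : Prop := ∀ x ∈ C, ¬ LitTrue T x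

instance (T : Finset ℕ) (C : Finset ℤ) : Decidable (Falsifies T C) :=
  inferInstanceAs (Decidable (∀ _ ∈ _, _))

def posVars (C : Finset ℤ) : Finset ℕ := clauseVar (C.filter (0 < ·))

def negVars (C : Finset ℤ) : Finset ℕ := clauseVar (C.filter (· < 0))

lemma litTrue_neg_iff {T : Finset ℕ} {x : ℤ} (hx : x ≠ 0) :
    LitTrue T (-x) ↔ ¬ LitTrue T x := by
  rw [LitTrue, LitTrue, Int.natAbs_neg, Int.neg_pos, show x < 0 ↔ ¬ 0 < x by omega]
  tauto

lemma card_clauseVar {C : Finset ℤ} (hC : ∀ x ∈ C, -x ∉ C) : #(clauseVar C) = #C := by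
  refine card_image_of_injOn fun x hx y hy hxy => ?_
  rcases Int.natAbs_eq_natAbs_iff.mp hxy with h | h
  · exact h
  · exact absurd (by rwa [h, neg_neg]) (hC x hx)

lemma clauseVar_mono {C D : Finset ℤ} (h : C ⊆ D) : clauseVar C ⊆ clauseVar D :=
  image_subset_image h

lemma clauseVar_subset_var {F : Finset (Finset ℤ)} {C : Finset ℤ} (hC : C ∈ F) :
    clauseVar C ⊆ var F :=
  subset_biUnion_of_mem _ hC

lemma IsClause.filter {C : Finset ℤ} (hC : IsClause C) (p : ℤ → Prop) [DecidablePred p] :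
    IsClause (C.filter p) :=
  ⟨fun h => hC.1 (mem_of_mem_filter _ h),
    fun x hx h => hC.2 x (mem_of_mem_filter _ hx) (mem_of_mem_filter _ h)⟩

lemma card_posVars_add_card_negVars {C : Finset ℤ} (hC : IsClause C) :
    #(posVars C) + #(negVars C) = #C := by
  rw [posVars, negVars, card_clauseVar (hC.filter _).2, card_clauseVar (hC.filter _).2,
    ← card_filter_add_card_filter_not (s := C) (0 < ·)]
  congr 2
  exact filter_congr fun x hx => by have := ne_of_mem_of_not_mem hx hC.1; omega

lemma disjoint_negVars_posVars {C : Finset ℤ} (hC : ∀ x ∈ C, -x ∉ C) :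
    Disjoint (negVars C) (posVars C) := by
  simp only [negVars, posVars, clauseVar, disjoint_left, mem_image, mem_filter]
  rintro _ ⟨x, ⟨hx, hneg⟩, rfl⟩ ⟨y, ⟨hy, hpos⟩, hxy⟩
  rcases Int.natAbs_eq_natAbs_iff.mp hxy with h | h
  · omega
  · exact hC x hx (h ▸ hy)

lemma falsifies_iff {T : Finset ℕ} {C : Finset ℤ} (h0 : (0 : ℤ) ∉ C) :
    Falsifies T C ↔ negVars C ⊆ T ∧ Disjoint T (posVars C) := by
  simp only [Falsifies, LitTrue, negVars, posVars, clauseVar, subset_iff, disjoint_right,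
    mem_image, mem_filter, forall_exists_index, and_imp]
  constructor
  · intro h
    refine ⟨fun _ x hx hneg hv => ?_, fun _ x hx hpos hv hT => ?_⟩
    · subst hv
      by_contra hT
      exact h x hx (iff_of_false hT hneg.not_gt)
    · subst hv
      exact h x hx (iff_of_true hT hpos)
  · rintro ⟨hneg, hpos⟩ x hx hT
    rcases (ne_of_mem_of_not_mem hx h0).lt_or_gt with hx' | hx'
    · exact hx'.not_gt (hT.1 (hneg x hx hx' rfl))
    · exact hpos x hx hx' rfl (hT.2 hx')

lemma filter_falsifies_powerset_eq_Icc {V : Finset ℕ} {C : Finset ℤ} (h0 : (0 : ℤ) ∉ C) :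
    V.powerset.filter (Falsifies · C) = Icc (negVars C) (V \ posVars C) := by
  ext T
  simp only [mem_filter, mem_powerset, mem_Icc, subset_sdiff, falsifies_iff h0]
  exact and_left_comm

lemma card_filter_falsifies_powerset {V : Finset ℕ} {C : Finset ℤ} (hC : IsClause C)
    (hCV : clauseVar C ⊆ V) :
    #(V.powerset.filter (Falsifies · C)) = 2 ^ (#V - #C) := by
  have hposV : posVars C ⊆ V := (clauseVar_mono (filter_subset _ _)).trans hCV
  have hneg : negVars C ⊆ V \ posVars C :=
    subset_sdiff.2
      ⟨(clauseVar_mono (filter_subset _ _)).trans hCV, disjoint_negVars_posVars hC.2⟩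
  rw [filter_falsifies_powerset_eq_Icc hC.1, card_Icc_finset hneg, card_sdiff_of_subset hposV,
    ← card_posVars_add_card_negVars hC, Nat.sub_sub]

lemma clauseVar_eq_var_iff {F : Finset (Finset ℤ)} {C : Finset ℤ} (hC : IsClause C)
    (hCF : C ∈ F) : clauseVar C = var F ↔ numVar F ≤ #C := by
  rw [numVar, ← card_clauseVar hC.2]
  exact ⟨fun h => h ▸ le_rfl, eq_of_subset_of_card_le (clauseVar_subset_var hCF)⟩

lemma numVar_pos {F : Finset (Finset ℤ)} (hunsat : ¬ Satisfiable F)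
    (hne : F ≠ ({∅} : Finset (Finset ℤ))) : 0 < numVar F := by
  have hF : F.Nonempty :=
    nonempty_iff_ne_empty.2 fun h => hunsat ⟨∅, ⟨by simp, by simp⟩, by simp [h]⟩
  obtain ⟨C, hC, x, hx⟩ : ∃ C ∈ F, C.Nonempty := by
    by_contra! h
    exact hne (hF.subset_singleton_iff.1 fun C hC => mem_singleton.2 (h C hC))
  exact card_pos.2 ⟨_, clauseVar_subset_var hC (mem_image_of_mem _ hx)⟩

lemma exists_falsifies_of_not_satisfiable {F : Finset (Finset ℤ)} (hF : IsClauseSet F)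
    (hunsat : ¬ Satisfiable F) (T : Finset ℕ) : ∃ C ∈ F, Falsifies T C := by
  by_contra! h
  simp only [Falsifies, not_forall, not_not] at h
  have hne : ∀ x ∈ F.biUnion id, x ≠ 0 := fun x hx => by
    obtain ⟨C, hC, hxC⟩ := mem_biUnion.1 hx
    exact ne_of_mem_of_not_mem hxC (hF C hC).1
  -- the literals of `F` made true by `T` form a clause meeting every clause of `F`
  refine hunsat ⟨(F.biUnion id).filter (LitTrue T), ⟨?_, ?_⟩, fun D hD => ?_⟩
  · exact fun h0 => hne 0 (mem_of_mem_filter _ h0) rfl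
  · intro x hx hnx
    rw [mem_filter] at hx hnx
    exact (litTrue_neg_iff (hne x hx.1)).1 hnx.2 hx.2
  · obtain ⟨x, hx, hTx⟩ := h D hD
    exact ⟨x, mem_inter.2 ⟨mem_filter.2 ⟨mem_biUnion.2 ⟨D, hD, hx⟩, hTx⟩, hx⟩⟩

lemma Hitting.eq_of_falsifies {F : Finset (Finset ℤ)} (hhit : Hitting F) (hF : IsClauseSet F)
    {T : Finset ℕ} {C D : Finset ℤ} (hC : C ∈ F) (hD : D ∈ F) (hTC : Falsifies T C)
    (hTD : Falsifies T D) : C = D := by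
  by_contra hCD
  obtain ⟨x, hx, hnx⟩ := hhit C hC D hD hCD
  exact hTD (-x) hnx ((litTrue_neg_iff (ne_of_mem_of_not_mem hx (hF C hC).1)).2 (hTC x hx))

/-- The counting form of `∑_{C ∈ F} 2^{-|C|} = 1`. -/
theorem two_pow_numVar_eq_sum {F : Finset (Finset ℤ)} (hF : IsClauseSet F)
    (hunsat : ¬ Satisfiable F) (hhit : Hitting F) :
    2 ^ numVar F = ∑ C ∈ F, 2 ^ (numVar F - #C) := by
  have hunique (T : Finset ℕ) : #(F.bipartiteAbove Falsifies T) = 1 := by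
    obtain ⟨C, hC, hTC⟩ := exists_falsifies_of_not_satisfiable hF hunsat T
    refine card_eq_one.2 ⟨C, eq_singleton_iff_unique_mem.2 ⟨mem_filter.2 ⟨hC, hTC⟩, ?_⟩⟩
    rintro D hD
    exact hhit.eq_of_falsifies hF (mem_filter.1 hD).1 hC (mem_filter.1 hD).2 hTC
  calc 2 ^ numVar F = ∑ T ∈ (var F).powerset, #(F.bipartiteAbove Falsifies T) := by
        simp [hunique, numVar]
    _ = ∑ C ∈ F, #((var F).powerset.bipartiteBelow Falsifies C) :=
        sum_card_bipartiteAbove_eq_sum_card_bipartiteBelow _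
    _ = ∑ C ∈ F, 2 ^ (numVar F - #C) :=
        sum_congr rfl fun C hC =>
          card_filter_falsifies_powerset (hF C hC) (clauseVar_subset_var hC)

theorem stmt_15 (F : Finset (Finset ℤ)) (hF : IsClauseSet F)
    (hunsat : ¬ Satisfiable F) (hhit : Hitting F)
    (hne : F ≠ ({∅} : Finset (Finset ℤ))) :
    Even (nfc F) := by
  have heven : Even (∑ C ∈ F, 2 ^ (numVar F - #C)) := by
    rw [← two_pow_numVar_eq_sum hF hunsat hhit]
    exact Nat.even_pow.2 ⟨even_two, (numVar_pos hunsat hne).ne'⟩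
  rw [even_sum_iff_even_card_odd] at heven
  rw [nfc]
  convert heven using 2
  refine filter_congr fun C hC => ?_
  rw [clauseVar_eq_var_iff (hF C hC) hC, ← Nat.not_even_iff_odd, Nat.even_pow]
  simp only [even_two, true_and, not_not]
  omega
end

section
/- Let F be a minimally unsatisfiable clause-set with n(F) > 0 such that nfc(F) = μvd(F). Then: (a) a variable v ∈ var(F) has vdeg_F(v) = μvd(F) if and only if v occurs only in full clauses of F (i.e., every C ∈ F with v ∈ var(C) is a full clause); (b) nfc(F) is even. -/
lemma mem_clauseVar {C : Finset ℤ} {v : ℕ} : v ∈ clauseVar C ↔ ∃ x ∈ C, x.natAbs = v := by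
  simp [clauseVar]

lemma clauseVar_card {C : Finset ℤ} (hC : IsClause C) : (clauseVar C).card = C.card := by
  apply Finset.card_image_of_injOn
  intro a ha b hb hab
  rcases Int.natAbs_eq_natAbs_iff.1 hab with h | h
  · exact h
  · exact absurd (h ▸ ha) (hC.2 b hb)

/-- In a minimally unsatisfiable clause-set, every full clause clashes with
every other clause. -/
lemma clash {F : Finset (Finset ℤ)} (hF : IsClauseSet F) (hmu : MinUnsat F)
    {C : Finset ℤ} (hC : C ∈ F) (hfull : clauseVar C = var F)
    {E : Finset ℤ} (hE : E ∈ F) (hne : E ≠ C) :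
    ∃ z ∈ E, -z ∈ C := by
  obtain ⟨D, hD, hsat⟩ := hmu.2 (F.erase C) (Finset.erase_ssubset hC)
  have hDC : ∀ x ∈ D, x ∉ C := by
    intro x hxD hxC
    exact hmu.1 ⟨D, hD, fun E' hE' => by
      rcases eq_or_ne E' C with rfl | h'
      · exact ⟨x, Finset.mem_inter.2 ⟨hxD, hxC⟩⟩
      · exact hsat E' (Finset.mem_erase.2 ⟨h', hE'⟩)⟩
  obtain ⟨z, hz⟩ := hsat E (Finset.mem_erase.2 ⟨hne, hE⟩)
  rw [Finset.mem_inter] at hz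
  have hzv : z.natAbs ∈ clauseVar C := by
    rw [hfull, var]
    exact Finset.mem_biUnion.2 ⟨E, hE, mem_clauseVar.2 ⟨z, hz.2, rfl⟩⟩
  obtain ⟨c, hcC, hc⟩ := mem_clauseVar.1 hzv
  rcases Int.natAbs_eq_natAbs_iff.1 hc with h | h
  · exact absurd (h ▸ hcC) (hDC z hz.1)
  · exact ⟨z, hz.2, h ▸ hcC⟩

lemma isClause_flip {C : Finset ℤ} (hC : IsClause C) {x : ℤ} (hxC : x ∈ C) :
    IsClause (insert (-x) (C.erase x)) := by
  have hx0 : x ≠ 0 := fun h => hC.1 (h ▸ hxC)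
  constructor
  · intro h
    rcases Finset.mem_insert.1 h with h | h
    · exact hx0 (by omega)
    · exact hC.1 (Finset.mem_of_mem_erase h)
  · intro y hy hny
    rcases Finset.mem_insert.1 hy with rfl | hy
    · rcases Finset.mem_insert.1 hny with h | h
      · exact hx0 (by omega)
      · rw [neg_neg] at h
        exact Finset.notMem_erase x C h
    · rcases Finset.mem_insert.1 hny with h | h
      · have hyx : y = x := by omega
        exact Finset.notMem_erase x C (hyx ▸ hy)
      · exact hC.2 y (Finset.mem_of_mem_erase hy) (Finset.mem_of_mem_erase h)

lemma clauseVar_flip {C : Finset ℤ} {x : ℤ} (hxC : x ∈ C) :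
    clauseVar (insert (-x) (C.erase x)) = clauseVar C := by
  ext w
  simp only [mem_clauseVar]
  constructor
  · rintro ⟨y, hy, rfl⟩
    rcases Finset.mem_insert.1 hy with rfl | hy
    · exact ⟨x, hxC, by simp⟩
    · exact ⟨y, Finset.mem_of_mem_erase hy, rfl⟩
  · rintro ⟨y, hy, rfl⟩
    by_cases h : y = x
    · exact ⟨-x, Finset.mem_insert_self _ _, by simp [h]⟩
    · exact ⟨y, Finset.mem_insert_of_mem (Finset.mem_erase.2 ⟨h, hy⟩), rfl⟩

/-- Flipping the literal of a variable occurring only in full clauses yields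
again a clause of `F`. -/
lemma flip_mem {F : Finset (Finset ℤ)} (hF : IsClauseSet F) (hmu : MinUnsat F)
    {v : ℕ} (hv : v ∈ var F)
    (honly : ∀ C ∈ F, v ∈ clauseVar C → clauseVar C = var F)
    {x : ℤ} (hx : x.natAbs = v) {C : Finset ℤ} (hC : C ∈ F) (hxC : x ∈ C) :
    insert (-x) (C.erase x) ∈ F := by
  by_contra hC'
  set C' := insert (-x) (C.erase x) with hC'def
  have hCc := hF C hC
  have hnx : -x ∉ C := hCc.2 x hxC
  have hCfull : clauseVar C = var F := honly C hC (mem_clauseVar.2 ⟨x, hxC, hx⟩)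
  have hC'c : IsClause C' := isClause_flip hCc hxC
  have hcardC' : C'.card = C.card := by
    rw [hC'def, Finset.card_insert_of_notMem (fun h => hnx (Finset.mem_of_mem_erase h)),
      Finset.card_erase_of_mem hxC]
    have : 0 < C.card := Finset.card_pos.2 ⟨x, hxC⟩
    omega
  apply hmu.1
  refine ⟨C'.image (fun y => -y), ⟨?_, ?_⟩, ?_⟩
  · rw [Finset.mem_image]
    rintro ⟨y, hy, hy0⟩
    have : y = 0 := by omega
    exact hC'c.1 (this ▸ hy)
  · intro z hz hnz
    rw [Finset.mem_image] at hz hnz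
    obtain ⟨y, hy, rfl⟩ := hz
    obtain ⟨y', hy', hy''⟩ := hnz
    have : y' = -y := by omega
    exact hC'c.2 y hy (this ▸ hy')
  · intro E hE
    rcases eq_or_ne E C with rfl | hne
    · exact ⟨x, Finset.mem_inter.2 ⟨Finset.mem_image.2
        ⟨-x, Finset.mem_insert_self _ _, neg_neg x⟩, hxC⟩⟩
    · obtain ⟨z, hzE, hzC⟩ := clash hF hmu hC hCfull hE hne
      by_cases hzx : -z = x
      · -- z = -x occurs in E, so E is a full clause
        have hzmx : z = -x := by omega
        have hnxE : -x ∈ E := hzmx ▸ hzE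
        have hEfull : clauseVar E = var F :=
          honly E hE (mem_clauseVar.2 ⟨-x, hnxE, by simpa using hx⟩)
        by_contra hcon
        have hsub : C' ⊆ E := by
          intro y hy
          have hyv : y.natAbs ∈ clauseVar E := by
            rw [hEfull, ← hCfull, ← clauseVar_flip hxC]
            exact mem_clauseVar.2 ⟨y, hy, rfl⟩
          obtain ⟨e, heE, he⟩ := mem_clauseVar.1 hyv
          rcases Int.natAbs_eq_natAbs_iff.1 he with h | h
          · exact h ▸ heE
          · exact absurd ⟨-y, Finset.mem_inter.2
              ⟨Finset.mem_image.2 ⟨y, hy, rfl⟩, h ▸ heE⟩⟩ hcon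
        have hcardE : E.card ≤ C'.card := by
          rw [hcardC', ← clauseVar_card (hF E hE), ← clauseVar_card hCc, hEfull, hCfull]
        exact hC' ((Finset.eq_of_subset_of_card_le hsub hcardE) ▸ hE)
      · refine ⟨z, Finset.mem_inter.2 ⟨Finset.mem_image.2 ⟨-z, ?_, neg_neg z⟩, hzE⟩⟩
        exact Finset.mem_insert_of_mem (Finset.mem_erase.2 ⟨hzx, hzC⟩)

theorem stmt_17 (F : Finset (Finset ℤ)) (hF : IsClauseSet F) (hmu : MinUnsat F)
    (hn : 0 < numVar F) (hfc : nfc F = minVarDeg F) :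
    (∀ v ∈ var F, (vdeg F v = minVarDeg F ↔
      ∀ C ∈ F, v ∈ clauseVar C → clauseVar C = var F)) ∧
    Even (nfc F) := by
  have hQsubP : ∀ v ∈ var F, F.filter (fun C => clauseVar C = var F)
      ⊆ F.filter (fun C => v ∈ clauseVar C) := by
    intro v hv C hCf
    rw [Finset.mem_filter] at hCf ⊢
    exact ⟨hCf.1, hCf.2 ▸ hv⟩
  have parta : ∀ v ∈ var F, (vdeg F v = minVarDeg F ↔
      ∀ C ∈ F, v ∈ clauseVar C → clauseVar C = var F) := by
    intro v hv
    constructor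
    · intro hd C hCF hvC
      have hcard : (F.filter (fun C => v ∈ clauseVar C)).card
          ≤ (F.filter (fun C => clauseVar C = var F)).card := by
        show vdeg F v ≤ nfc F
        rw [hd, hfc]
      have heq := Finset.eq_of_subset_of_card_le (hQsubP v hv) hcard
      have hCP : C ∈ F.filter (fun C => v ∈ clauseVar C) := Finset.mem_filter.2 ⟨hCF, hvC⟩
      rw [← heq] at hCP
      exact (Finset.mem_filter.1 hCP).2
    · intro honly
      have hPQ : F.filter (fun C => v ∈ clauseVar C)
          = F.filter (fun C => clauseVar C = var F) := by
        apply Finset.Subset.antisymm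
        · intro C hCf
          rw [Finset.mem_filter] at hCf ⊢
          exact ⟨hCf.1, honly C hCf.1 hCf.2⟩
        · exact hQsubP v hv
      show (F.filter (fun C => v ∈ clauseVar C)).card = minVarDeg F
      rw [hPQ, ← nfc, hfc]
  refine ⟨parta, ?_⟩
  obtain ⟨v₀, hv₀⟩ := Finset.card_pos.1 hn
  have hSne : {d : ℕ | ∃ v ∈ var F, vdeg F v = d}.Nonempty := ⟨vdeg F v₀, v₀, hv₀, rfl⟩
  obtain ⟨v, hv, hvd⟩ := Nat.sInf_mem hSne
  have honly := (parta v hv).1 hvd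
  obtain ⟨C₀, hC₀, hvC₀⟩ := Finset.mem_biUnion.1 hv
  obtain ⟨x₀, hx₀, hx₀v⟩ := mem_clauseVar.1 hvC₀
  have hx₀0 : x₀ ≠ 0 := fun h => (hF C₀ hC₀).1 (h ▸ hx₀)
  have hv0 : v ≠ 0 := by omega
  set S := F.filter (fun C => clauseVar C = var F) with hSdef
  set A := S.filter (fun C => (v : ℤ) ∈ C) with hAdef
  set B := S.filter (fun C => -(v : ℤ) ∈ C) with hBdef
  have hdich : ∀ C ∈ S, ((v : ℤ) ∈ C ∧ -(v : ℤ) ∉ C) ∨ ((v : ℤ) ∉ C ∧ -(v : ℤ) ∈ C) := by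
    intro C hCS
    rw [hSdef, Finset.mem_filter] at hCS
    have hvC : v ∈ clauseVar C := hCS.2 ▸ hv
    obtain ⟨x, hxC, hxv⟩ := mem_clauseVar.1 hvC
    rcases Int.natAbs_eq_iff.1 hxv with rfl | rfl
    · exact Or.inl ⟨hxC, (hF C hCS.1).2 _ hxC⟩
    · right
      refine ⟨fun h => (hF C hCS.1).2 _ h ?_, hxC⟩
      simpa using hxC
  have hmemS : ∀ C ∈ S, C ∈ F ∧ clauseVar C = var F := by
    intro C hCS
    rw [hSdef, Finset.mem_filter] at hCS
    exact hCS
  -- the flip maps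
  have hAB : A.card = B.card := by
    refine Finset.card_bij' (fun C _ => insert (-(v : ℤ)) (C.erase (v : ℤ)))
      (fun C _ => insert ((v : ℤ)) (C.erase (-(v : ℤ)))) ?_ ?_ ?_ ?_
    · intro C hCA
      rw [hAdef, Finset.mem_filter] at hCA
      obtain ⟨hCS, hvC⟩ := hCA
      obtain ⟨hCF, hCfull⟩ := hmemS C hCS
      have hmem : insert (-(v : ℤ)) (C.erase (v : ℤ)) ∈ F :=
        flip_mem hF hmu hv honly (by simp) hCF hvC
      rw [hBdef, Finset.mem_filter, hSdef, Finset.mem_filter]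
      exact ⟨⟨hmem, by rw [clauseVar_flip hvC, hCfull]⟩, Finset.mem_insert_self _ _⟩
    · intro C hCB
      rw [hBdef, Finset.mem_filter] at hCB
      obtain ⟨hCS, hvC⟩ := hCB
      obtain ⟨hCF, hCfull⟩ := hmemS C hCS
      have hmem : insert (-(-(v : ℤ))) (C.erase (-(v : ℤ))) ∈ F :=
        flip_mem hF hmu hv honly (by simp) hCF hvC
      rw [neg_neg] at hmem
      rw [hAdef, Finset.mem_filter, hSdef, Finset.mem_filter]
      refine ⟨⟨hmem, ?_⟩, Finset.mem_insert_self _ _⟩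
      have := clauseVar_flip (x := -(v : ℤ)) hvC
      rw [neg_neg] at this
      rw [this, hCfull]
    · intro C hCA
      rw [hAdef, Finset.mem_filter] at hCA
      obtain ⟨hCS, hvC⟩ := hCA
      have hnv : -(v : ℤ) ∉ C.erase (v : ℤ) :=
        fun h => (hF C (hmemS C hCS).1).2 _ hvC (Finset.mem_of_mem_erase h)
      show insert ((v : ℤ)) ((insert (-(v : ℤ)) (C.erase (v : ℤ))).erase (-(v : ℤ))) = C
      rw [Finset.erase_insert hnv, Finset.insert_erase hvC]
    · intro C hCB
      rw [hBdef, Finset.mem_filter] at hCB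
      obtain ⟨hCS, hvC⟩ := hCB
      have hnv : (v : ℤ) ∉ C.erase (-(v : ℤ)) :=
        fun h => (hF C (hmemS C hCS).1).2 _ (Finset.mem_of_mem_erase h) hvC
      show insert (-(v : ℤ)) ((insert ((v : ℤ)) (C.erase (-(v : ℤ)))).erase ((v : ℤ))) = C
      rw [Finset.erase_insert hnv, Finset.insert_erase hvC]
  have hBneg : S.filter (fun C => ¬ (v : ℤ) ∈ C) = B := by
    ext C
    simp only [Finset.mem_filter, hBdef]
    constructor
    · rintro ⟨hCS, h⟩
      rcases hdich C hCS with h' | h'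
      · exact absurd h'.1 h
      · exact ⟨hCS, h'.2⟩
    · rintro ⟨hCS, h⟩
      rcases hdich C hCS with h' | h'
      · exact absurd h h'.2
      · exact ⟨hCS, h'.1⟩
  have hsplit := Finset.card_filter_add_card_filter_not (s := S)
    (fun C => (v : ℤ) ∈ C)
  rw [hBneg] at hsplit
  have hnfcS : nfc F = S.card := rfl
  have : nfc F = B.card + B.card := by
    rw [hnfcS, ← hsplit, hAB]
  exact ⟨B.card, this⟩
end
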